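/- arXiv:1608.07207 — 6 statements merged into one kernel-verified Lean document; each statement's English description precedes it below -/
import Mathlib

section
/- Let R be an invertible n×n real matrix, G an invertible b×b real matrix, Z an n×b real matrix, and X an n×p real matrix. Set H = R + ZGZᵀ, assume H, XᵀH⁻¹X, ZᵀR⁻¹Z + G⁻¹, and the mixed-model coefficient matrix C = [[XᵀR⁻¹X, XᵀR⁻¹Z],[ZᵀR⁻¹X, ZᵀR⁻¹Z + G⁻¹]] are invertible, and let W = [X Z] be the n×(p+b) matrix obtained by concatenating the columns of X and Z. Then H⁻¹ − H⁻¹X(XᵀH⁻¹X)⁻¹XᵀH⁻¹ = R⁻¹ − R⁻¹W C⁻¹ Wᵀ R⁻¹. -/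
/-!
By the Woodbury identity, `H⁻¹ = K := R⁻¹ - R⁻¹ Z D⁻¹ Zᵀ R⁻¹` with `D = Zᵀ R⁻¹ Z + G⁻¹`.
Invert `C` through the Schur complement of its `D`-block; that complement,
`Xᵀ R⁻¹ X - Xᵀ R⁻¹ Z D⁻¹ Zᵀ R⁻¹ X`, is exactly `Xᵀ K X`. Hence
`R⁻¹ W C⁻¹ Wᵀ R⁻¹ = R⁻¹ Z D⁻¹ Zᵀ R⁻¹ + K X (Xᵀ K X)⁻¹ Xᵀ K`, and subtracting it from `R⁻¹`
leaves `K - K X (Xᵀ K X)⁻¹ Xᵀ K`. The second step holds for any matrix `Q` in place of `R⁻¹`.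
-/

open Matrix

namespace Matrix

variable {l m n α : Type*} [Fintype m] [Fintype n] [DecidableEq m] [DecidableEq n]
  [CommRing α]

theorem fromCols_mul_inv_fromBlocks_mul_fromRows {l' : Type*}
    (X : Matrix l m α) (Z : Matrix l n α) (A : Matrix m m α) (B : Matrix m n α)
    (C : Matrix n m α) (D : Matrix n n α) (U : Matrix m l' α) (V : Matrix n l' α)
    (hD : IsUnit D.det) (hS : IsUnit (A - B * D⁻¹ * C).det) :
    fromCols X Z * (fromBlocks A B C D)⁻¹ * fromRows U V =
      Z * D⁻¹ * V + (X - Z * D⁻¹ * C) * (A - B * D⁻¹ * C)⁻¹ * (U - B * D⁻¹ * V) := by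
  have := D.invertibleOfIsUnitDet hD
  have := (A - B * ⅟D * C).invertibleOfIsUnitDet (by rwa [invOf_eq_nonsing_inv])
  have := fromBlocks₂₂Invertible A B C D
  simp only [← invOf_eq_nonsing_inv, invOf_fromBlocks₂₂_eq, fromCols_mul_fromBlocks,
    fromCols_mul_fromRows]
  simp only [Matrix.mul_add, Matrix.add_mul, Matrix.mul_sub, Matrix.sub_mul, Matrix.mul_neg,
    Matrix.neg_mul, Matrix.mul_assoc]
  abel

theorem sub_mul_fromCols_mul_inv_fromBlocks_eq [Fintype l] (Q : Matrix l l α) (X : Matrix l m α)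
    (Z : Matrix l n α) (D : Matrix n n α) (hD : IsUnit D.det)
    (hK : IsUnit (Xᵀ * (Q - Q * Z * D⁻¹ * Zᵀ * Q) * X).det) :
    Q - Q * fromCols X Z * (fromBlocks (Xᵀ * Q * X) (Xᵀ * Q * Z) (Zᵀ * Q * X) D)⁻¹ *
        (fromCols X Z)ᵀ * Q =
      (Q - Q * Z * D⁻¹ * Zᵀ * Q) - (Q - Q * Z * D⁻¹ * Zᵀ * Q) * X *
        (Xᵀ * (Q - Q * Z * D⁻¹ * Zᵀ * Q) * X)⁻¹ * Xᵀ * (Q - Q * Z * D⁻¹ * Zᵀ * Q) := by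
  set K := Q - Q * Z * D⁻¹ * Zᵀ * Q with hK_def
  have hSchur : Xᵀ * Q * X - Xᵀ * Q * Z * D⁻¹ * (Zᵀ * Q * X) = Xᵀ * K * X := by
    simp only [hK_def, Matrix.mul_sub, Matrix.sub_mul, Matrix.mul_assoc]
  have hLeft : Q * (X - Z * D⁻¹ * (Zᵀ * Q * X)) = K * X := by
    simp only [hK_def, Matrix.mul_sub, Matrix.sub_mul, Matrix.mul_assoc]
  have hRight : (Xᵀ - Xᵀ * Q * Z * D⁻¹ * Zᵀ) * Q = Xᵀ * K := by
    simp only [hK_def, Matrix.mul_sub, Matrix.sub_mul, Matrix.mul_assoc]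
  calc Q - Q * fromCols X Z * (fromBlocks (Xᵀ * Q * X) (Xᵀ * Q * Z) (Zᵀ * Q * X) D)⁻¹ *
          (fromCols X Z)ᵀ * Q
      = Q - Q * (fromCols X Z * (fromBlocks (Xᵀ * Q * X) (Xᵀ * Q * Z) (Zᵀ * Q * X) D)⁻¹ *
          fromRows Xᵀ Zᵀ) * Q := by
        simp only [transpose_fromCols, Matrix.mul_assoc]
    _ = Q - Q * Z * D⁻¹ * Zᵀ * Q - Q * (X - Z * D⁻¹ * (Zᵀ * Q * X)) * (Xᵀ * K * X)⁻¹ *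
          ((Xᵀ - Xᵀ * Q * Z * D⁻¹ * Zᵀ) * Q) := by
        rw [fromCols_mul_inv_fromBlocks_mul_fromRows _ _ _ _ _ _ _ _ hD (by rwa [hSchur]),
          hSchur]
        simp only [Matrix.mul_add, Matrix.add_mul, Matrix.mul_assoc, sub_add_eq_sub_sub]
    _ = K - K * X * (Xᵀ * K * X)⁻¹ * Xᵀ * K := by
        rw [hLeft, hRight]
        simp only [hK_def, Matrix.mul_assoc]

end Matrix

theorem stmt_7_general {n b p : ℕ} (R : Matrix (Fin n) (Fin n) ℝ) (G : Matrix (Fin b) (Fin b) ℝ)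
    (Z : Matrix (Fin n) (Fin b) ℝ) (X : Matrix (Fin n) (Fin p) ℝ)
    (hR : IsUnit R.det) (hG : IsUnit G.det)
    (H : Matrix (Fin n) (Fin n) ℝ) (hH : H = R + Z * G * Zᵀ)
    (C : Matrix (Fin p ⊕ Fin b) (Fin p ⊕ Fin b) ℝ)
    (hC : C = Matrix.fromBlocks (Xᵀ * R⁻¹ * X) (Xᵀ * R⁻¹ * Z)
                (Zᵀ * R⁻¹ * X) (Zᵀ * R⁻¹ * Z + G⁻¹))
    (W : Matrix (Fin n) (Fin p ⊕ Fin b) ℝ) (hW : W = Matrix.fromCols X Z)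
    (hXHX : IsUnit (Xᵀ * H⁻¹ * X).det)
    (hD : IsUnit (Zᵀ * R⁻¹ * Z + G⁻¹).det) :
    H⁻¹ - H⁻¹ * X * (Xᵀ * H⁻¹ * X)⁻¹ * Xᵀ * H⁻¹ = R⁻¹ - R⁻¹ * W * C⁻¹ * Wᵀ * R⁻¹ := by
  have hWoodbury : H⁻¹ = R⁻¹ - R⁻¹ * Z * (Zᵀ * R⁻¹ * Z + G⁻¹)⁻¹ * Zᵀ * R⁻¹ := by
    rw [hH, add_mul_mul_inv_eq_sub R Z G Zᵀ ((isUnit_iff_isUnit_det R).mpr hR)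
      ((isUnit_iff_isUnit_det G).mpr hG) (by rwa [add_comm, isUnit_iff_isUnit_det]),
      add_comm G⁻¹]
  rw [hWoodbury] at hXHX ⊢
  rw [hC, hW]
  exact (sub_mul_fromCols_mul_inv_fromBlocks_eq R⁻¹ X Z _ hD hXHX).symm

theorem stmt_7 {n b p : ℕ} (R : Matrix (Fin n) (Fin n) ℝ) (G : Matrix (Fin b) (Fin b) ℝ)
    (Z : Matrix (Fin n) (Fin b) ℝ) (X : Matrix (Fin n) (Fin p) ℝ)
    (hR : IsUnit R.det) (hG : IsUnit G.det)
    (H : Matrix (Fin n) (Fin n) ℝ) (hH : H = R + Z * G * Zᵀ)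
    (C : Matrix (Fin p ⊕ Fin b) (Fin p ⊕ Fin b) ℝ)
    (hC : C = Matrix.fromBlocks (Xᵀ * R⁻¹ * X) (Xᵀ * R⁻¹ * Z)
                (Zᵀ * R⁻¹ * X) (Zᵀ * R⁻¹ * Z + G⁻¹))
    (W : Matrix (Fin n) (Fin p ⊕ Fin b) ℝ) (hW : W = Matrix.fromCols X Z)
    (hHinv : IsUnit H.det) (hXHX : IsUnit (Xᵀ * H⁻¹ * X).det)
    (hD : IsUnit (Zᵀ * R⁻¹ * Z + G⁻¹).det) (hCinv : IsUnit C.det) :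
    H⁻¹ - H⁻¹ * X * (Xᵀ * H⁻¹ * X)⁻¹ * Xᵀ * H⁻¹ = R⁻¹ - R⁻¹ * W * C⁻¹ * Wᵀ * R⁻¹ :=
  stmt_7_general R G Z X hR hG H hH C hC W hW hXHX hD
end

section
/- Let R be an invertible n×n real matrix, G an invertible b×b real matrix, Z an n×b real matrix, X an n×p real matrix, and y an n-vector. Set H = R + ZGZᵀ, assume H, XᵀH⁻¹X, ZᵀR⁻¹Z + G⁻¹, and the mixed-model coefficient matrix C = [[XᵀR⁻¹X, XᵀR⁻¹Z],[ZᵀR⁻¹X, ZᵀR⁻¹Z + G⁻¹]] are invertible, and define P = H⁻¹ − H⁻¹X(XᵀH⁻¹X)⁻¹XᵀH⁻¹. Let (τ̂, ũ) ∈ ℝᵖ × ℝᵇ be the solution of the mixed model equations C(τ̂; ũ) = (XᵀR⁻¹y; ZᵀR⁻¹y), and let e = y − Xτ̂ − Zũ be the fitted residual. Then Py = R⁻¹e. -/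
open Matrix

/-!
The second block of the mixed model equations says `Zᵀ R⁻¹ e = G⁻¹ ũ`, hence
`y - X τ̂ = e + Z ũ = (R + Z G Zᵀ) R⁻¹ e = H R⁻¹ e`. The first block says `Xᵀ R⁻¹ e = 0`, i.e.
`Xᵀ H⁻¹ (y - X τ̂) = 0`, so `τ̂` is the generalized least squares estimate
`(Xᵀ H⁻¹ X)⁻¹ Xᵀ H⁻¹ y` and `P y = H⁻¹ (y - X τ̂) = R⁻¹ e`.
-/

namespace Matrix

variable {K : Type*} [CommRing K] {m q r : Type*} [Fintype m] [Fintype q] [Fintype r]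

theorem mixed_model_equations_iff (W : Matrix m m K) (X : Matrix m r K)
    (Z : Matrix m q K) (D : Matrix q q K) (y : m → K) (τ : r → K) (u : q → K) :
    fromBlocks (Xᵀ * W * X) (Xᵀ * W * Z) (Zᵀ * W * X) (Zᵀ * W * Z + D) *ᵥ Sum.elim τ u
        = Sum.elim ((Xᵀ * W) *ᵥ y) ((Zᵀ * W) *ᵥ y) ↔
      (Xᵀ * W) *ᵥ (y - X *ᵥ τ - Z *ᵥ u) = 0 ∧ (Zᵀ * W) *ᵥ (y - X *ᵥ τ - Z *ᵥ u) = D *ᵥ u := by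
  simp only [fromBlocks_mulVec, Sum.elim_eq_iff, Sum.elim_comp_inl, Sum.elim_comp_inr, add_mulVec,
    mulVec_sub, mulVec_mulVec]
  constructor <;> rintro ⟨h₁, h₂⟩ <;> exact ⟨by linear_combination -h₁, by linear_combination -h₂⟩

theorem add_mul_mul_transpose_mulVec_inv_mulVec [DecidableEq m] [DecidableEq q]
    {R : Matrix m m K} {G : Matrix q q K} (hR : IsUnit R.det) (hG : IsUnit G.det)
    (Z : Matrix m q K) {e : m → K} {u : q → K} (h : (Zᵀ * R⁻¹) *ᵥ e = G⁻¹ *ᵥ u) :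
    (R + Z * G * Zᵀ) *ᵥ (R⁻¹ *ᵥ e) = e + Z *ᵥ u := by
  rw [add_mulVec, mulVec_mulVec, mul_nonsing_inv R hR, one_mulVec, Matrix.mul_assoc,
    ← mulVec_mulVec, ← mulVec_mulVec _ G, mulVec_mulVec _ Zᵀ, h, mulVec_mulVec _ G,
    mul_nonsing_inv G hG, one_mulVec]

theorem eq_inv_mulVec_of_normal_eq [DecidableEq r] (V : Matrix m m K) {X : Matrix m r K}
    (hX : IsUnit (Xᵀ * V * X).det) {y : m → K} {τ : r → K}
    (h : (Xᵀ * V) *ᵥ (y - X *ᵥ τ) = 0) :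
    τ = ((Xᵀ * V * X)⁻¹ * Xᵀ * V) *ᵥ y := by
  rw [mulVec_sub, mulVec_mulVec, sub_eq_zero] at h
  rw [Matrix.mul_assoc, ← mulVec_mulVec, h, mulVec_mulVec, nonsing_inv_mul _ hX, one_mulVec]

theorem sub_mul_inv_mul_mulVec_of_normal_eq [DecidableEq r] (V : Matrix m m K)
    {X : Matrix m r K} (hX : IsUnit (Xᵀ * V * X).det) {y : m → K} {τ : r → K}
    (h : (Xᵀ * V) *ᵥ (y - X *ᵥ τ) = 0) :
    (V - V * X * (Xᵀ * V * X)⁻¹ * Xᵀ * V) *ᵥ y = V *ᵥ (y - X *ᵥ τ) := by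
  conv_rhs => rw [eq_inv_mulVec_of_normal_eq V hX h]
  simp only [sub_mulVec, mulVec_sub, mulVec_mulVec, Matrix.mul_assoc]

end Matrix

theorem stmt_8_general {n b p : ℕ} (R : Matrix (Fin n) (Fin n) ℝ) (G : Matrix (Fin b) (Fin b) ℝ)
    (Z : Matrix (Fin n) (Fin b) ℝ) (X : Matrix (Fin n) (Fin p) ℝ) (y : Fin n → ℝ)
    (hR : IsUnit R.det) (hG : IsUnit G.det)
    (H : Matrix (Fin n) (Fin n) ℝ) (hH : H = R + Z * G * Zᵀ)
    (C : Matrix (Fin p ⊕ Fin b) (Fin p ⊕ Fin b) ℝ)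
    (hC : C = Matrix.fromBlocks (Xᵀ * R⁻¹ * X) (Xᵀ * R⁻¹ * Z)
                (Zᵀ * R⁻¹ * X) (Zᵀ * R⁻¹ * Z + G⁻¹))
    (hHinv : IsUnit H.det) (hXHX : IsUnit (Xᵀ * H⁻¹ * X).det)
    (P : Matrix (Fin n) (Fin n) ℝ)
    (hP : P = H⁻¹ - H⁻¹ * X * (Xᵀ * H⁻¹ * X)⁻¹ * Xᵀ * H⁻¹)
    (τ : Fin p → ℝ) (u : Fin b → ℝ)
    (hsol : C *ᵥ Sum.elim τ u = Sum.elim ((Xᵀ * R⁻¹) *ᵥ y) ((Zᵀ * R⁻¹) *ᵥ y))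
    (e : Fin n → ℝ) (he : e = y - X *ᵥ τ - Z *ᵥ u) :
    P *ᵥ y = R⁻¹ *ᵥ e := by
  rw [hC, mixed_model_equations_iff, ← he] at hsol
  obtain ⟨hXe, hZe⟩ := hsol
  have hHe : H *ᵥ (R⁻¹ *ᵥ e) = y - X *ᵥ τ := by
    rw [hH, add_mul_mul_transpose_mulVec_inv_mulVec hR hG Z hZe, he, sub_add_cancel]
  have hHinv_e : H⁻¹ *ᵥ (y - X *ᵥ τ) = R⁻¹ *ᵥ e := by
    rw [← hHe, mulVec_mulVec, nonsing_inv_mul H hHinv, one_mulVec]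
  have hnormal : (Xᵀ * H⁻¹) *ᵥ (y - X *ᵥ τ) = 0 := by
    rw [← mulVec_mulVec, hHinv_e, mulVec_mulVec, hXe]
  rw [hP, sub_mul_inv_mul_mulVec_of_normal_eq H⁻¹ hXHX hnormal, hHinv_e]

theorem stmt_8 {n b p : ℕ} (R : Matrix (Fin n) (Fin n) ℝ) (G : Matrix (Fin b) (Fin b) ℝ)
    (Z : Matrix (Fin n) (Fin b) ℝ) (X : Matrix (Fin n) (Fin p) ℝ) (y : Fin n → ℝ)
    (hR : IsUnit R.det) (hG : IsUnit G.det)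
    (H : Matrix (Fin n) (Fin n) ℝ) (hH : H = R + Z * G * Zᵀ)
    (C : Matrix (Fin p ⊕ Fin b) (Fin p ⊕ Fin b) ℝ)
    (hC : C = Matrix.fromBlocks (Xᵀ * R⁻¹ * X) (Xᵀ * R⁻¹ * Z)
                (Zᵀ * R⁻¹ * X) (Zᵀ * R⁻¹ * Z + G⁻¹))
    (hHinv : IsUnit H.det) (hXHX : IsUnit (Xᵀ * H⁻¹ * X).det)
    (hD : IsUnit (Zᵀ * R⁻¹ * Z + G⁻¹).det) (hCinv : IsUnit C.det)
    (P : Matrix (Fin n) (Fin n) ℝ)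
    (hP : P = H⁻¹ - H⁻¹ * X * (Xᵀ * H⁻¹ * X)⁻¹ * Xᵀ * H⁻¹)
    (τ : Fin p → ℝ) (u : Fin b → ℝ)
    (hsol : C *ᵥ Sum.elim τ u = Sum.elim ((Xᵀ * R⁻¹) *ᵥ y) ((Zᵀ * R⁻¹) *ᵥ y))
    (e : Fin n → ℝ) (he : e = y - X *ᵥ τ - Z *ᵥ u) :
    P *ᵥ y = R⁻¹ *ᵥ e :=
  stmt_8_general R G Z X y hR hG H hH C hC hHinv hXHX P hP τ u hsol e he
end

section
/- Let R be an invertible n×n real matrix, G an invertible b×b real matrix, Z an n×b real matrix, and X an n×p real matrix. Set H = R + ZGZᵀ, and assume H is invertible. Then the determinant of the mixed-model coefficient matrix C = [[XᵀR⁻¹X, XᵀR⁻¹Z],[ZᵀR⁻¹X, ZᵀR⁻¹Z + G⁻¹]] satisfies det C = det(XᵀH⁻¹X) · det(G⁻¹ + ZᵀR⁻¹Z), provided G⁻¹ + ZᵀR⁻¹Z is invertible. -/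
open Matrix

theorem stmt_9 {n b p : ℕ} (R : Matrix (Fin n) (Fin n) ℝ) (G : Matrix (Fin b) (Fin b) ℝ)
    (Z : Matrix (Fin n) (Fin b) ℝ) (X : Matrix (Fin n) (Fin p) ℝ)
    (hR : IsUnit R.det) (hG : IsUnit G.det)
    (H : Matrix (Fin n) (Fin n) ℝ) (hH : H = R + Z * G * Zᵀ) (hHinv : IsUnit H.det)
    (C : Matrix (Fin p ⊕ Fin b) (Fin p ⊕ Fin b) ℝ)
    (hC : C = Matrix.fromBlocks (Xᵀ * R⁻¹ * X) (Xᵀ * R⁻¹ * Z)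
                (Zᵀ * R⁻¹ * X) (Zᵀ * R⁻¹ * Z + G⁻¹))
    (hD : IsUnit (G⁻¹ + Zᵀ * R⁻¹ * Z).det) :
    C.det = (Xᵀ * H⁻¹ * X).det * (G⁻¹ + Zᵀ * R⁻¹ * Z).det := by
  have hRu : IsUnit R := (Matrix.isUnit_iff_isUnit_det R).2 hR
  have hGu : IsUnit G := (Matrix.isUnit_iff_isUnit_det G).2 hG
  have hDu : IsUnit (G⁻¹ + Zᵀ * R⁻¹ * Z) := (Matrix.isUnit_iff_isUnit_det _).2 hD
  have hW : H⁻¹ = R⁻¹ - R⁻¹ * Z * (G⁻¹ + Zᵀ * R⁻¹ * Z)⁻¹ * Zᵀ * R⁻¹ := by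
    rw [hH]; exact Matrix.add_mul_mul_inv_eq_sub R Z G Zᵀ hRu hGu hDu
  haveI : Invertible (Zᵀ * R⁻¹ * Z + G⁻¹) := by
    rw [add_comm]; exact hDu.invertible
  rw [hC, Matrix.det_fromBlocks₂₂]
  have h1 : ⅟(Zᵀ * R⁻¹ * Z + G⁻¹) = (G⁻¹ + Zᵀ * R⁻¹ * Z)⁻¹ := by
    rw [Matrix.invOf_eq_nonsing_inv, add_comm]
  rw [h1]
  have h2 : Xᵀ * R⁻¹ * X - Xᵀ * R⁻¹ * Z * (G⁻¹ + Zᵀ * R⁻¹ * Z)⁻¹ * (Zᵀ * R⁻¹ * X)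
      = Xᵀ * H⁻¹ * X := by
    rw [hW]
    simp only [Matrix.mul_sub, Matrix.sub_mul, Matrix.mul_assoc]
  rw [h2, add_comm (Zᵀ * R⁻¹ * Z), mul_comm]
end

section
/- Let R be a positive definite n×n real matrix, G a positive definite b×b real matrix, Z an n×b real matrix, and X an n×p real matrix of rank p. Set H = R + ZGZᵀ and let C = [[XᵀR⁻¹X, XᵀR⁻¹Z],[ZᵀR⁻¹X, ZᵀR⁻¹Z + G⁻¹]] be the mixed-model coefficient matrix. Then log det(H) + log det(XᵀH⁻¹X) = log det(C) + log det(R) + log det(G). -/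
/-!
Both sides factor through the capacitance matrix `D = ZᵀR⁻¹Z + G⁻¹`, the lower-right block of `C`.
The matrix determinant lemma gives `det H = det R · det G · det D`. The Schur complement of `D`
in `C` is `Xᵀ(R⁻¹ - R⁻¹Z D⁻¹ ZᵀR⁻¹)X`, which by the Woodbury identity is `XᵀH⁻¹X`, so
`det C = det D · det (XᵀH⁻¹X)`. Since `R`, `G`, `D` and (as `X` has full column rank)
`XᵀH⁻¹X` are positive definite, all these determinants are positive and the logarithms split.
-/

open Matrix

namespace Matrix

theorem mulVec_injective_of_rank_eq_card {m n K : Type*} [Fintype n] [Field K] (A : Matrix m n K)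
    (h : A.rank = Fintype.card n) : Function.Injective A.mulVec := by
  have hsum : A.rank + Module.finrank K (LinearMap.ker A.mulVecLin) = Fintype.card n := by
    rw [← Module.finrank_fintype_fun_eq_card K]
    exact A.mulVecLin.finrank_range_add_finrank_ker
  have hker : Module.finrank K (LinearMap.ker A.mulVecLin) = 0 := by omega
  exact LinearMap.ker_eq_bot.mp (Submodule.finrank_eq_zero.mp hker)

variable {l m n α : Type*} [Fintype l] [Fintype m] [Fintype n] [DecidableEq l] [DecidableEq m]
  [DecidableEq n] [CommRing α]

theorem det_add_mul_mul {A : Matrix n n α} {C : Matrix m m α} (U : Matrix n m α)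
    (V : Matrix m n α) (hA : IsUnit A) (hC : IsUnit C) :
    (A + U * C * V).det = A.det * C.det * (V * A⁻¹ * U + C⁻¹).det := by
  have hfactor : 1 + C * V * A⁻¹ * U = C * (V * A⁻¹ * U + C⁻¹) := by
    rw [Matrix.mul_add, mul_nonsing_inv C ((isUnit_iff_isUnit_det C).mp hC), add_comm]
    simp only [Matrix.mul_assoc]
  rw [Matrix.mul_assoc, det_add_mul U (C * V) ((isUnit_iff_isUnit_det A).mp hA), hfactor,
    det_mul, mul_assoc]

theorem det_fromBlocks_mul_inv_mul {A : Matrix n n α} {C : Matrix m m α}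
    (P : Matrix l n α) (Q : Matrix n l α) (U : Matrix n m α) (V : Matrix m n α)
    (hA : IsUnit A) (hC : IsUnit C) (hD : IsUnit (V * A⁻¹ * U + C⁻¹)) :
    (fromBlocks (P * A⁻¹ * Q) (P * A⁻¹ * U) (V * A⁻¹ * Q) (V * A⁻¹ * U + C⁻¹)).det =
      (V * A⁻¹ * U + C⁻¹).det * (P * (A + U * C * V)⁻¹ * Q).det := by
  obtain ⟨_⟩ := hD.nonempty_invertible
  have hwoodbury := add_mul_mul_inv_eq_sub A U C V hA hC (add_comm (V * A⁻¹ * U) C⁻¹ ▸ hD)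
  rw [det_fromBlocks₂₂, invOf_eq_nonsing_inv, hwoodbury, add_comm C⁻¹]
  simp only [Matrix.mul_sub, Matrix.sub_mul, Matrix.mul_assoc]

end Matrix

theorem stmt_11 {n b p : ℕ} (R : Matrix (Fin n) (Fin n) ℝ) (G : Matrix (Fin b) (Fin b) ℝ)
    (Z : Matrix (Fin n) (Fin b) ℝ) (X : Matrix (Fin n) (Fin p) ℝ)
    (hR : R.PosDef) (hG : G.PosDef) (hX : X.rank = p)
    (H : Matrix (Fin n) (Fin n) ℝ) (hH : H = R + Z * G * Zᵀ)
    (C : Matrix (Fin p ⊕ Fin b) (Fin p ⊕ Fin b) ℝ)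
    (hC : C = Matrix.fromBlocks (Xᵀ * R⁻¹ * X) (Xᵀ * R⁻¹ * Z)
                (Zᵀ * R⁻¹ * X) (Zᵀ * R⁻¹ * Z + G⁻¹)) :
    Real.log H.det + Real.log (Xᵀ * H⁻¹ * X).det =
      Real.log C.det + Real.log R.det + Real.log G.det := by
  have hD : (Zᵀ * R⁻¹ * Z + G⁻¹).PosDef := by
    refine hG.inv.posSemidef_add ?_
    simpa using hR.inv.posSemidef.conjTranspose_mul_mul_same Z
  have hHpos : H.PosDef := by
    rw [hH]
    simpa using hR.add_posSemidef (hG.posSemidef.mul_mul_conjTranspose_same Z)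
  have hS : (Xᵀ * H⁻¹ * X).PosDef := by
    simpa using hHpos.inv.conjTranspose_mul_mul_same
      (X.mulVec_injective_of_rank_eq_card (by simpa using hX))
  have hdetH : H.det = R.det * G.det * (Zᵀ * R⁻¹ * Z + G⁻¹).det :=
    hH ▸ det_add_mul_mul Z Zᵀ hR.isUnit hG.isUnit
  have hdetC : C.det = (Zᵀ * R⁻¹ * Z + G⁻¹).det * (Xᵀ * H⁻¹ * X).det :=
    hC ▸ hH ▸ det_fromBlocks_mul_inv_mul Xᵀ X Z Zᵀ hR.isUnit hG.isUnit hD.isUnit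
  rw [hdetH, hdetC, Real.log_mul (mul_ne_zero hR.det_pos.ne' hG.det_pos.ne') hD.det_pos.ne',
    Real.log_mul hR.det_pos.ne' hG.det_pos.ne', Real.log_mul hD.det_pos.ne' hS.det_pos.ne']
  ring
end

section
/- Let H be a symmetric positive definite n×n real matrix, X an n×p real matrix of rank p, and L₁ (n×p) and L₂ (n×(n−p)) real matrices such that [L₁ L₂] is nonsingular, L₁ᵀX = I_p, and L₂ᵀX = 0. Then H⁻¹ − H⁻¹X(XᵀH⁻¹X)⁻¹XᵀH⁻¹ = L₂(L₂ᵀHL₂)⁻¹L₂ᵀ. -/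
/-!
Put `R₁ = (Xᵀ H⁻¹ X)⁻¹ Xᵀ H⁻¹` and `R₂ = (L₂ᵀ H L₂)⁻¹ L₂ᵀ`. Since `L₂ᵀ X = 0`, the block matrix
`[R₁; R₂]` is a left inverse of `[X, H L₂]`. This matrix is square (`L₁ᵀ X = 1` forces `p ≤ n`),
so `[R₁; R₂]` is also a right inverse: `X R₁ + H L₂ R₂ = 1`. Multiplying by `H⁻¹` on the left gives
`H⁻¹ - H⁻¹ X R₁ = L₂ R₂`. The two Gram matrices are invertible because they are positive definite:
`X` is injective as it has the left inverse `L₁ᵀ`, and `L₂` is injective as a block of the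
invertible matrix `[L₁ L₂]`.
-/

open Matrix

namespace Matrix

variable {n n₁ n₂ : Type*} [Fintype n₁] [Fintype n₂]

lemma mulVec_injective_of_mul_eq_one [Fintype n] [DecidableEq n₁] {A : Matrix n₁ n ℝ}
    {B : Matrix n n₁ ℝ} (h : A * B = 1) : Function.Injective B.mulVec := fun u v huv => by
  simpa [mulVec_mulVec, h] using congrArg (A *ᵥ ·) huv

lemma mulVec_injective_of_fromCols_right {A : Matrix n n₁ ℝ} {B : Matrix n n₂ ℝ}
    (h : Function.Injective (fromCols A B).mulVec) : Function.Injective B.mulVec := fun u v huv => by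
  have := h (a₁ := Sum.elim 0 u) (a₂ := Sum.elim 0 v) (by simpa [fromCols_mulVec_sumElim] using huv)
  simpa using congrArg (· ∘ Sum.inr) this

namespace PosDef

lemma transpose_mul_mul_same [Fintype n] {A : Matrix n n ℝ} (hA : A.PosDef) {B : Matrix n n₁ ℝ}
    (hB : Function.Injective B.mulVec) : (Bᵀ * A * B).PosDef := by
  simpa using hA.conjTranspose_mul_mul_same hB

theorem inv_sub_eq_of_transpose_mul_eq_zero [Fintype n] [DecidableEq n] [DecidableEq n₁]
    [DecidableEq n₂] (hcard : Fintype.card n = Fintype.card n₁ + Fintype.card n₂)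
    {H : Matrix n n ℝ} (hH : H.PosDef) {X : Matrix n n₁ ℝ} {K : Matrix n n₂ ℝ}
    (hX : Function.Injective X.mulVec) (hK : Function.Injective K.mulVec) (hKX : Kᵀ * X = 0) :
    H⁻¹ - H⁻¹ * X * (Xᵀ * H⁻¹ * X)⁻¹ * Xᵀ * H⁻¹ = K * (Kᵀ * H * K)⁻¹ * Kᵀ := by
  have hH' : IsUnit H.det := (isUnit_iff_isUnit_det H).mp hH.isUnit
  have hP : IsUnit (Xᵀ * H⁻¹ * X).det :=
    (isUnit_iff_isUnit_det _).mp (hH.inv.transpose_mul_mul_same hX).isUnit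
  have hQ : IsUnit (Kᵀ * H * K).det :=
    (isUnit_iff_isUnit_det _).mp (hH.transpose_mul_mul_same hK).isUnit
  set R₁ := (Xᵀ * H⁻¹ * X)⁻¹ * Xᵀ * H⁻¹
  set R₂ := (Kᵀ * H * K)⁻¹ * Kᵀ
  have hXK : Xᵀ * K = 0 := by simpa using congrArg Matrix.transpose hKX
  have hleft : fromRows R₁ R₂ * fromCols X (H * K) = 1 := by
    rw [fromRows_mul_fromCols, ← fromBlocks_one]
    congr 1
    · simp only [R₁, Matrix.mul_assoc] at hP ⊢
      exact nonsing_inv_mul _ hP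
    · simp only [R₁, Matrix.mul_assoc, nonsing_inv_mul_cancel_left _ _ hH', hXK, Matrix.mul_zero]
    · simp only [R₂, Matrix.mul_assoc, hKX, Matrix.mul_zero]
    · simp only [R₂, Matrix.mul_assoc] at hQ ⊢
      exact nonsing_inv_mul _ hQ
  have hright : X * R₁ + H * K * R₂ = 1 := by
    rwa [← fromCols_mul_fromRows,
      fromCols_mul_fromRows_eq_one_comm (Fintype.equivOfCardEq (by simp [hcard]))]
  calc H⁻¹ - H⁻¹ * X * (Xᵀ * H⁻¹ * X)⁻¹ * Xᵀ * H⁻¹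
      = H⁻¹ * (X * R₁ + H * K * R₂) - H⁻¹ * (X * R₁) := by
        rw [hright, Matrix.mul_one]
        simp only [R₁, Matrix.mul_assoc]
    _ = K * R₂ := by
        rw [Matrix.mul_add, add_sub_cancel_left, Matrix.mul_assoc,
          nonsing_inv_mul_cancel_left _ _ hH']
    _ = K * (Kᵀ * H * K)⁻¹ * Kᵀ := by simp only [R₂, Matrix.mul_assoc]

end PosDef

end Matrix

theorem stmt_15_general {n p : ℕ} (H : Matrix (Fin n) (Fin n) ℝ)
    (X : Matrix (Fin n) (Fin p) ℝ)
    (L₁ : Matrix (Fin n) (Fin p) ℝ) (L₂ : Matrix (Fin n) (Fin (n - p)) ℝ)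
    (hH : H.PosDef)
    (hL : ∃ M : Matrix (Fin p ⊕ Fin (n - p)) (Fin n) ℝ,
      Matrix.fromCols L₁ L₂ * M = 1 ∧ M * Matrix.fromCols L₁ L₂ = 1)
    (hL₁X : L₁ᵀ * X = 1) (hL₂X : L₂ᵀ * X = 0) :
    H⁻¹ - H⁻¹ * X * (Xᵀ * H⁻¹ * X)⁻¹ * Xᵀ * H⁻¹ = L₂ * (L₂ᵀ * H * L₂)⁻¹ * L₂ᵀ := by
  obtain ⟨M, -, hM⟩ := hL
  have hX : Function.Injective X.mulVec := mulVec_injective_of_mul_eq_one hL₁X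
  have hpn : p ≤ n := by
    simpa using LinearMap.finrank_le_finrank_of_injective (f := X.mulVecLin) hX
  have hL₂ : Function.Injective L₂.mulVec :=
    mulVec_injective_of_fromCols_right (mulVec_injective_of_mul_eq_one hM)
  exact hH.inv_sub_eq_of_transpose_mul_eq_zero (by simp; omega) hX hL₂ hL₂X

theorem stmt_15 {n p : ℕ} (H : Matrix (Fin n) (Fin n) ℝ)
    (X : Matrix (Fin n) (Fin p) ℝ)
    (L₁ : Matrix (Fin n) (Fin p) ℝ) (L₂ : Matrix (Fin n) (Fin (n - p)) ℝ)
    (hH : H.PosDef) (hX : X.rank = p)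
    (hL : ∃ M : Matrix (Fin p ⊕ Fin (n - p)) (Fin n) ℝ,
      Matrix.fromCols L₁ L₂ * M = 1 ∧ M * Matrix.fromCols L₁ L₂ = 1)
    (hL₁X : L₁ᵀ * X = 1) (hL₂X : L₂ᵀ * X = 0) :
    H⁻¹ - H⁻¹ * X * (Xᵀ * H⁻¹ * X)⁻¹ * Xᵀ * H⁻¹ = L₂ * (L₂ᵀ * H * L₂)⁻¹ * L₂ᵀ :=
  stmt_15_general H X L₁ L₂ hH hL hL₁X hL₂X
end

section
/- Let H be a symmetric positive definite n×n real matrix, X an n×p real matrix of rank p, and L₁ (n×p) and L₂ (n×(n−p)) real matrices such that L = [L₁ L₂] is nonsingular, L₁ᵀX = I_p, and L₂ᵀX = 0. Then det(LᵀHL) = det((XᵀH⁻¹X)⁻¹) · det(L₂ᵀHL₂); equivalently, det(H) · det(LᵀL) · det(XᵀH⁻¹X) = det(L₂ᵀHL₂). -/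
/-!
Put `K = LᵀHL` and `E = [I; 0]`. The hypotheses on `L₁, L₂` say `LᵀX = E`, so `X = L⁻ᵀE` and
`XᵀH⁻¹X = Eᵀ(L⁻¹H⁻¹L⁻ᵀ)E` is the top-left block of `K⁻¹`. The bottom-right block of `K` is
`L₂ᵀHL₂`, positive definite like `K`, and the Schur complement formula identifies the top-left
block of `K⁻¹` with the inverse of the Schur complement `S` of that block, while
`det K = det(L₂ᵀHL₂) · det S`. Since `L` is square, `det K = det H · det(LᵀL)`.
-/

open Matrix

namespace Matrix

variable {m n k q R : Type*} [CommRing R]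

theorem det_transpose_mul_mul_of_card_eq [Fintype m] [Fintype n] [DecidableEq m] [DecidableEq n]
    (h : Fintype.card m = Fintype.card n)
    (H : Matrix n n R) (L : Matrix n m R) : (Lᵀ * H * L).det = H.det * (Lᵀ * L).det := by
  let e : m ≃ n := Fintype.equivOfCardEq h
  set L' : Matrix n n R := L.submatrix id e.symm
  have hconj (G : Matrix n n R) : Lᵀ * G * L = (L'ᵀ * G * L').submatrix e e := by
    ext i j
    simp [L', mul_apply, Finset.sum_mul]
  have hgram : Lᵀ * L = (L'ᵀ * L').submatrix e e := by
    simpa only [Matrix.mul_one] using hconj 1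
  rw [hconj, hgram, det_submatrix_equiv_self, det_submatrix_equiv_self, det_mul, det_mul, det_mul]
  ring

theorem fromCols_transpose_mul_mul_fromCols [Fintype n] (H : Matrix n n R) (L₁ : Matrix n m R)
    (L₂ : Matrix n q R) :
    (fromCols L₁ L₂)ᵀ * H * fromCols L₁ L₂ =
      fromBlocks (L₁ᵀ * H * L₁) (L₁ᵀ * H * L₂) (L₂ᵀ * H * L₁) (L₂ᵀ * H * L₂) := by
  simp only [transpose_fromCols, fromRows_mul, mul_fromCols, fromCols_fromRows_eq_fromBlocks]

theorem fromRows_one_zero_transpose_mul_mul [Fintype m] [Fintype q] [DecidableEq m]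
    (W : Matrix (m ⊕ q) (m ⊕ q) R) :
    (fromRows (1 : Matrix m m R) (0 : Matrix q m R))ᵀ * W *
      fromRows (1 : Matrix m m R) (0 : Matrix q m R) = W.toBlocks₁₁ := by
  rw [transpose_fromRows, transpose_one, transpose_zero, ← fromBlocks_toBlocks W,
    fromCols_mul_fromBlocks, fromCols_mul_fromRows]
  simp

theorem transpose_mul_nonsing_inv_mul_eq [Fintype m] [Fintype n] [DecidableEq m] [DecidableEq n]
    {L : Matrix n m R} {M : Matrix m n R}
    (hLM : L * M = 1) (hML : M * L = 1) {H : Matrix n n R} (hH : IsUnit H.det)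
    (Y : Matrix n k R) : Yᵀ * H⁻¹ * Y = (Lᵀ * Y)ᵀ * (Lᵀ * H * L)⁻¹ * (Lᵀ * Y) := by
  have hMtLt : Mᵀ * Lᵀ = 1 := by rw [← transpose_mul, hLM, transpose_one]
  have hinv : (Lᵀ * H * L)⁻¹ = M * H⁻¹ * Mᵀ := by
    refine inv_eq_right_inv ?_
    calc Lᵀ * H * L * (M * H⁻¹ * Mᵀ) = Lᵀ * (H * (L * M) * H⁻¹) * Mᵀ := by
          simp only [Matrix.mul_assoc]
      _ = (M * L)ᵀ := by rw [hLM, Matrix.mul_one, mul_nonsing_inv H hH, Matrix.mul_one,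
          transpose_mul]
      _ = 1 := by rw [hML, transpose_one]
  calc Yᵀ * H⁻¹ * Y = Yᵀ * (L * M) * H⁻¹ * (Mᵀ * Lᵀ) * Y := by
        rw [hLM, hMtLt, Matrix.mul_one, Matrix.mul_one]
    _ = (Lᵀ * Y)ᵀ * (Lᵀ * H * L)⁻¹ * (Lᵀ * Y) := by
        rw [hinv, transpose_mul, transpose_transpose]
        simp only [Matrix.mul_assoc]

section Schur

variable [Fintype m] [Fintype q] [DecidableEq m] [DecidableEq q]
  {A : Matrix m m R} {B : Matrix m q R} {C : Matrix q m R} {D : Matrix q q R}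

theorem det_fromBlocks_eq_det_mul_det_schur (hD : IsUnit D.det) :
    (fromBlocks A B C D).det = D.det * (A - B * D⁻¹ * C).det := by
  let := invertibleOfIsUnitDet D hD
  rw [det_fromBlocks₂₂, invOf_eq_nonsing_inv]

theorem inv_fromBlocks_toBlocks₁₁ (hK : IsUnit (fromBlocks A B C D).det) (hD : IsUnit D.det) :
    ((fromBlocks A B C D)⁻¹).toBlocks₁₁ = (A - B * D⁻¹ * C)⁻¹ := by
  let := invertibleOfIsUnitDet _ hK
  let := invertibleOfIsUnitDet D hD
  let := invertibleOfFromBlocks₂₂Invertible A B C D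
  rw [← invOf_eq_nonsing_inv (fromBlocks A B C D), invOf_fromBlocks₂₂_eq, toBlocks_fromBlocks₁₁,
    invOf_eq_nonsing_inv, invOf_eq_nonsing_inv D]

theorem isUnit_det_schur (hK : IsUnit (fromBlocks A B C D).det) (hD : IsUnit D.det) :
    IsUnit (A - B * D⁻¹ * C).det := by
  rw [det_fromBlocks_eq_det_mul_det_schur hD] at hK
  exact isUnit_of_mul_isUnit_right hK

theorem det_fromBlocks_eq_det_inv_toBlocks₁₁_inv_mul (hK : IsUnit (fromBlocks A B C D).det)
    (hD : IsUnit D.det) :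
    (fromBlocks A B C D).det = (((fromBlocks A B C D)⁻¹).toBlocks₁₁)⁻¹.det * D.det := by
  rw [inv_fromBlocks_toBlocks₁₁ hK hD, nonsing_inv_nonsing_inv _ (isUnit_det_schur hK hD),
    det_fromBlocks_eq_det_mul_det_schur hD, mul_comm]

theorem det_fromBlocks_mul_det_inv_toBlocks₁₁ (hK : IsUnit (fromBlocks A B C D).det)
    (hD : IsUnit D.det) :
    (fromBlocks A B C D).det * ((fromBlocks A B C D)⁻¹).toBlocks₁₁.det = D.det := by
  rw [inv_fromBlocks_toBlocks₁₁ hK hD, det_fromBlocks_eq_det_mul_det_schur hD, mul_assoc,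
    ← det_mul, mul_nonsing_inv _ (isUnit_det_schur hK hD), det_one, mul_one]

end Schur

end Matrix

theorem stmt_17_general {n p : ℕ} (H : Matrix (Fin n) (Fin n) ℝ)
    (X : Matrix (Fin n) (Fin p) ℝ)
    (L₁ : Matrix (Fin n) (Fin p) ℝ) (L₂ : Matrix (Fin n) (Fin (n - p)) ℝ)
    (L : Matrix (Fin n) (Fin p ⊕ Fin (n - p)) ℝ) (hLdef : L = Matrix.fromCols L₁ L₂)
    (hH : H.PosDef)
    (hL : ∃ M : Matrix (Fin p ⊕ Fin (n - p)) (Fin n) ℝ, L * M = 1 ∧ M * L = 1)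
    (hL₁X : L₁ᵀ * X = 1) (hL₂X : L₂ᵀ * X = 0) :
    (Lᵀ * H * L).det = ((Xᵀ * H⁻¹ * X)⁻¹).det * (L₂ᵀ * H * L₂).det ∧
      H.det * (Lᵀ * L).det * (Xᵀ * H⁻¹ * X).det = (L₂ᵀ * H * L₂).det := by
  obtain ⟨M, hLM, hML⟩ := hL
  have hLinj : Function.Injective L.mulVec := fun x y hxy => by
    simpa [mulVec_mulVec, hML] using congrArg (M *ᵥ ·) hxy
  have hK : (Lᵀ * H * L).PosDef := by
    simpa [conjTranspose_eq_transpose_of_trivial] using hH.conjTranspose_mul_mul_same hLinj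
  have hblocks := fromCols_transpose_mul_mul_fromCols H L₁ L₂
  rw [← hLdef] at hblocks
  have hD : (L₂ᵀ * H * L₂).PosDef := by
    have hsub := hK.submatrix Sum.inr_injective
    rwa [hblocks] at hsub
  have hXHX : Xᵀ * H⁻¹ * X = ((Lᵀ * H * L)⁻¹).toBlocks₁₁ := by
    rw [transpose_mul_nonsing_inv_mul_eq hLM hML hH.det_pos.ne'.isUnit X, hLdef,
      transpose_fromCols, fromRows_mul, hL₁X, hL₂X, fromRows_one_zero_transpose_mul_mul]
  rw [hXHX, ← det_transpose_mul_mul_of_card_eq (square_of_invertible L M hLM hML).symm, hblocks]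
  rw [hblocks] at hK
  exact ⟨det_fromBlocks_eq_det_inv_toBlocks₁₁_inv_mul hK.det_pos.ne'.isUnit hD.det_pos.ne'.isUnit,
    det_fromBlocks_mul_det_inv_toBlocks₁₁ hK.det_pos.ne'.isUnit hD.det_pos.ne'.isUnit⟩

theorem stmt_17 {n p : ℕ} (H : Matrix (Fin n) (Fin n) ℝ)
    (X : Matrix (Fin n) (Fin p) ℝ)
    (L₁ : Matrix (Fin n) (Fin p) ℝ) (L₂ : Matrix (Fin n) (Fin (n - p)) ℝ)
    (L : Matrix (Fin n) (Fin p ⊕ Fin (n - p)) ℝ) (hLdef : L = Matrix.fromCols L₁ L₂)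
    (hH : H.PosDef) (hX : X.rank = p)
    (hL : ∃ M : Matrix (Fin p ⊕ Fin (n - p)) (Fin n) ℝ, L * M = 1 ∧ M * L = 1)
    (hL₁X : L₁ᵀ * X = 1) (hL₂X : L₂ᵀ * X = 0) :
    (Lᵀ * H * L).det = ((Xᵀ * H⁻¹ * X)⁻¹).det * (L₂ᵀ * H * L₂).det ∧
      H.det * (Lᵀ * L).det * (Xᵀ * H⁻¹ * X).det = (L₂ᵀ * H * L₂).det :=
  stmt_17_general H X L₁ L₂ L hLdef hH hL hL₁X hL₂X
end
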